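/- Let ν_r denote the uniform distribution on the circle of radius r in ℝ², μ the uniform distribution on the unit circle, and ν^{(R)} = (ν_{1/2} + ν_R)/2. Then ν^{(R)} dominates μ in convex order if and only if R ≥ 3/2. -/

import Mathlib

open MeasureTheory Set
open scoped ENNReal

noncomputable section

/-- The uniform distribution on the circle of radius `r` in `ℝ²`. -/
def circleUniform (r : ℝ) : Measure (EuclideanSpace ℝ (Fin 2)) :=
  Measure.map (fun θ : ℝ => (WithLp.toLp 2 (r • ![Real.cos θ, Real.sin θ]) : EuclideanSpace ℝ (Fin 2)))
    ((ENNReal.ofReal (2 * Real.pi))⁻¹ • volume.restrict (Set.Ico 0 (2 * Real.pi)))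

/-!
Identify `ℝ²` with `ℂ`; then integrating a continuous `f` against `circleUniform r` is taking
the circle average of `f` at radius `r`. For convex `g`, the circle average
`r ↦ circleAverage g c r` is convex, since `g` is convex along every ray, and nondecreasing in
`|r|`: the point `s z` on the circle of radius `s ≤ R` is the midpoint of the rotated points
`R e^{±iα} z` with `R cos α = s`, and circle averages are rotation invariant. Hence for
`R ≥ 3/2` the average at radius `1` is at most the mean of those at `1/2` and `3/2`, and so at
most the mean of those at `1/2` and `R`.
Conversely, the convex function `‖·‖` has mean `|r|` on the circle of radius `r`, which forces
`1 ≤ (1/2 + R) / 2`.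
-/

open Complex Real

theorem Continuous.circleIntegrable {E : Type*} [NormedAddCommGroup E] {f : ℂ → E}
    (hf : Continuous f) {c : ℂ} {R : ℝ} : CircleIntegrable f c R :=
  hf.continuousOn.circleIntegrable'

namespace Real

theorem circleAverage_eq_circleAverage_zero_one_mul_exp {E : Type*} [NormedAddCommGroup E]
    [NormedSpace ℝ E] (f : ℂ → E) (c : ℂ) (R α : ℝ) :
    circleAverage f c R = circleAverage (fun z ↦ f (R * Complex.exp (α * I) * z + c)) 0 1 := by
  rw [circleAverage_eq_integral_add α, circleAverage]
  congr with θ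
  simp only [circleMap, ofReal_add, add_mul, Complex.exp_add, ofReal_one, zero_add, one_mul]
  ring_nf

variable {g : ℂ → ℝ}

theorem _root_.ConvexOn.convexOn_circleAverage (hg : ConvexOn ℝ univ g) (c : ℂ) :
    ConvexOn ℝ univ (circleAverage g c) := by
  have hgc : Continuous g := hg.locallyLipschitz.continuous
  refine ⟨convex_univ, fun r _ s _ a b ha hb hab ↦ ?_⟩
  rw [circleAverage_eq_circleAverage_zero_one (R := r),
    circleAverage_eq_circleAverage_zero_one (R := s), circleAverage_eq_circleAverage_zero_one,
    ← circleAverage_fun_smul, ← circleAverage_fun_smul,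
    ← circleAverage_fun_add (Continuous.circleIntegrable (by fun_prop))
      (Continuous.circleIntegrable (by fun_prop))]
  refine circleAverage_mono (Continuous.circleIntegrable (by fun_prop))
    (Continuous.circleIntegrable (by fun_prop)) fun z _ ↦ ?_
  have hcomb :
      ((a • r + b • s : ℝ) : ℂ) * z + c = a • (r * z + c) + b • (s * z + c) := by
    simp only [real_smul, smul_eq_mul, ofReal_add, ofReal_mul]
    linear_combination (-c) * (by exact_mod_cast hab : (a : ℂ) + b = 1)
  rw [hcomb]
  exact hg.2 (mem_univ _) (mem_univ _) ha hb hab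

theorem _root_.ConvexOn.circleAverage_le_of_abs_le (hg : ConvexOn ℝ univ g) (c : ℂ) {s R : ℝ}
    (hsR : |s| ≤ |R|) : circleAverage g c s ≤ circleAverage g c R := by
  have hgc : Continuous g := hg.locallyLipschitz.continuous
  rw [← circleAverage_abs_radius (R := R)]
  set α := arccos (s / |R|)
  have hcos : |R| * Real.cos α = s := by
    have hs : abs (s / |R|) ≤ 1 := by
      rw [abs_div, abs_abs]; exact div_le_one_of_le₀ hsR (abs_nonneg R)
    rw [cos_arccos (abs_le.mp hs).1 (abs_le.mp hs).2]
    rcases (abs_nonneg R).eq_or_lt with hR | hR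
    · rw [← hR] at hsR ⊢; simpa using (abs_nonpos_iff.mp hsR).symm
    · field_simp
  have hmid : ∀ z : ℂ, (s : ℂ) * z + c =
      (2⁻¹ : ℝ) • (|R| * Complex.exp (α * I) * z + c)
        + (2⁻¹ : ℝ) • (|R| * Complex.exp ((-α : ℝ) * I) * z + c) := by
    intro z
    have hcos' : ((|R| : ℝ) : ℂ) * Complex.cos α = s := by exact_mod_cast hcos
    simp only [real_smul, exp_mul_I, ofReal_neg, Complex.cos_neg, Complex.sin_neg]
    push_cast
    linear_combination (-z) * hcos'
  calc circleAverage g c s = circleAverage (fun z ↦ g (s * z + c)) 0 1 :=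
        circleAverage_eq_circleAverage_zero_one
    _ ≤ circleAverage (fun z ↦ (2⁻¹ : ℝ) • g (|R| * Complex.exp (α * I) * z + c)
          + (2⁻¹ : ℝ) • g (|R| * Complex.exp ((-α : ℝ) * I) * z + c)) 0 1 := by
      refine circleAverage_mono (Continuous.circleIntegrable (by fun_prop))
        (Continuous.circleIntegrable (by fun_prop)) fun z _ ↦ ?_
      rw [hmid]
      exact hg.2 (mem_univ _) (mem_univ _) (by norm_num) (by norm_num) (by norm_num)
    _ = circleAverage g c |R| := by
      rw [circleAverage_fun_add (Continuous.circleIntegrable (by fun_prop))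
        (Continuous.circleIntegrable (by fun_prop)), circleAverage_fun_smul, circleAverage_fun_smul,
        ← circleAverage_eq_circleAverage_zero_one_mul_exp,
        ← circleAverage_eq_circleAverage_zero_one_mul_exp, ← add_smul]
      norm_num

end Real

theorem circleUniform_eq_map_circleMap (r : ℝ) :
    circleUniform r = Measure.map (fun θ ↦ orthonormalBasisOneI.repr (circleMap 0 r θ))
      ((ENNReal.ofReal (2 * π))⁻¹ • volume.restrict (Ico 0 (2 * π))) := by
  unfold circleUniform
  congr with θ i
  fin_cases i <;> simp [circleMap]

theorem integral_circleUniform {F : Type*} [NormedAddCommGroup F] [NormedSpace ℝ F]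
    {f : EuclideanSpace ℝ (Fin 2) → F} (hf : Continuous f) (r : ℝ) :
    ∫ x, f x ∂circleUniform r = circleAverage (f ∘ orthonormalBasisOneI.repr) 0 r := by
  rw [circleUniform_eq_map_circleMap,
    integral_map (by fun_prop : Continuous _).aemeasurable hf.aestronglyMeasurable,
    integral_smul_measure, circleAverage, intervalIntegral.integral_of_le two_pi_pos.le,
    ← integral_Icc_eq_integral_Ico, integral_Icc_eq_integral_Ioc, ENNReal.toReal_inv,
    ENNReal.toReal_ofReal two_pi_pos.le]
  rfl

theorem integrable_circleUniform {F : Type*} [NormedAddCommGroup F]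
    {f : EuclideanSpace ℝ (Fin 2) → F} (hf : Continuous f) (r : ℝ) :
    Integrable f (circleUniform r) := by
  rw [circleUniform_eq_map_circleMap,
    integrable_map_measure hf.aestronglyMeasurable (by fun_prop : Continuous _).aemeasurable]
  refine Integrable.smul_measure ?_ (by simp [pi_pos])
  exact ((hf.comp (by fun_prop)).integrableOn_Icc).mono_set Ico_subset_Icc_self

theorem integral_norm_circleUniform (r : ℝ) : ∫ x, ‖x‖ ∂circleUniform r = |r| := by
  rw [integral_circleUniform continuous_norm]
  exact circleAverage_const_on_circle fun z hz ↦ by simpa using hz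

theorem integral_inv_two_smul_circleUniform_add {f : EuclideanSpace ℝ (Fin 2) → ℝ}
    (hf : Continuous f) (r s : ℝ) :
    ∫ y, f y ∂((2 : ℝ≥0∞)⁻¹ • (circleUniform r + circleUniform s))
      = 2⁻¹ * (∫ y, f y ∂circleUniform r + ∫ y, f y ∂circleUniform s) := by
  rw [integral_smul_measure, integral_add_measure (integrable_circleUniform hf r)
    (integrable_circleUniform hf s)]
  simp

/-- With `μ` uniform on the unit circle and `ν^{(R)} = (ν_{1/2} + ν_R)/2` (uniform
distributions on the circles of radii `1/2` and `R > 0`), `ν^{(R)}` dominates `μ` in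
convex order if and only if `R ≥ 3/2`. -/
theorem circle_convex_order_iff (R : ℝ) (hR : 0 < R) :
    (∀ f : EuclideanSpace ℝ (Fin 2) → ℝ, ConvexOn ℝ Set.univ f →
      ∫ x, f x ∂(circleUniform 1)
        ≤ ∫ y, f y ∂((2 : ℝ≥0∞)⁻¹ • (circleUniform (1/2) + circleUniform R)))
    ↔ 3/2 ≤ R := by
  constructor
  · intro h
    have h_norm := h _ convexOn_univ_norm
    rw [integral_inv_two_smul_circleUniform_add continuous_norm, integral_norm_circleUniform,
      integral_norm_circleUniform, integral_norm_circleUniform, abs_of_pos hR] at h_norm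
    norm_num at h_norm
    linarith
  · intro h32 f hf
    set g := f ∘ orthonormalBasisOneI.repr
    have hg : ConvexOn ℝ univ g := hf.comp_linearMap orthonormalBasisOneI.repr.toLinearMap
    have hfc : Continuous f := hf.locallyLipschitz.continuous
    rw [integral_inv_two_smul_circleUniform_add hfc, integral_circleUniform hfc,
      integral_circleUniform hfc, integral_circleUniform hfc]
    calc circleAverage g 0 1
        = circleAverage g 0 (2⁻¹ • (1/2) + 2⁻¹ • (3/2)) := by norm_num
      _ ≤ 2⁻¹ • circleAverage g 0 (1/2) + 2⁻¹ • circleAverage g 0 (3/2) :=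
        (hg.convexOn_circleAverage 0).2 (mem_univ _) (mem_univ _) (by norm_num) (by norm_num)
          (by norm_num)
      _ ≤ 2⁻¹ * (circleAverage g 0 (1/2) + circleAverage g 0 R) := by
        rw [smul_eq_mul, smul_eq_mul, ← mul_add]
        gcongr
        exact hg.circleAverage_le_of_abs_le 0 (by rw [abs_of_pos hR]; norm_num; linarith)
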